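/- arXiv:1611.06872 — 3 statements merged into one kernel-verified Lean document; each statement's English description precedes it below -/
import Mathlib

section
/- Let x, y, z be real numbers with x < 0 and |y| < z < |x|. Then e^{−y/2}·(2 cosh(z/2)) − e^{x/2}·(2 cosh(x/2)) > e^{−y} − e^{x} > 0. In particular σ(x,y,z) > 0 when x < 0. -/
/-!
Since `e^a · 2 cosh b = e^{a+b} + e^{a-b}`, the term `e^{x/2} · 2 cosh (x/2)` equals `e^x + 1`,
and `e^{-y/2} · 2 cosh (z/2) = u + v` with `u = e^{(z-y)/2} > 1 > v = e^{-(y+z)/2}` and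
`u v = e^{-y}`. The main inequality is then `(u - 1)(1 - v) > 0`.
-/

open Real

/-- `σ(x,y,z) = sign(x)·( e^{x/2}·(2 cosh(x/2)) − e^{−y/2}·(2 cosh(z/2)) )` -/
noncomputable def sigmaK (x y z : ℝ) : ℝ :=
  Real.sign x *
    (Real.exp (x / 2) * (2 * Real.cosh (x / 2)) -
      Real.exp (-y / 2) * (2 * Real.cosh (z / 2)))

lemma mul_add_one_lt_add {u v : ℝ} (hu : 1 < u) (hv : v < 1) : u * v + 1 < u + v := by
  nlinarith [mul_pos (sub_pos.mpr hu) (sub_pos.mpr hv)]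

lemma exp_mul_two_mul_cosh (a b : ℝ) : exp a * (2 * cosh b) = exp (a + b) + exp (a - b) := by
  rw [cosh_eq, sub_eq_add_neg a b, exp_add, exp_add]
  ring

lemma exp_half_mul_two_mul_cosh_half (x : ℝ) : exp (x / 2) * (2 * cosh (x / 2)) = exp x + 1 := by
  rw [exp_mul_two_mul_cosh, add_halves, sub_self, exp_zero]

lemma exp_add_one_lt_exp_half_mul_two_mul_cosh_half {y z : ℝ} (h : |y| < z) :
    exp (-y) + 1 < exp (-y / 2) * (2 * cosh (z / 2)) := by
  obtain ⟨hzy, hyz⟩ := abs_lt.mp h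
  have hu : 1 < exp (-y / 2 + z / 2) := one_lt_exp_iff.mpr (by linarith)
  have hv : exp (-y / 2 - z / 2) < 1 := exp_lt_one_iff.mpr (by linarith)
  have huv : exp (-y / 2 + z / 2) * exp (-y / 2 - z / 2) = exp (-y) := by
    rw [← exp_add]
    ring_nf
  rw [exp_mul_two_mul_cosh, ← huv]
  exact mul_add_one_lt_add hu hv

theorem stmt1 (x y z : ℝ) (hx : x < 0) (hyz : |y| < z) (hzx : z < |x|) :
    (Real.exp (-y / 2) * (2 * Real.cosh (z / 2)) -
        Real.exp (x / 2) * (2 * Real.cosh (x / 2)) >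
      Real.exp (-y) - Real.exp x) ∧
    Real.exp (-y) - Real.exp x > 0 ∧
    sigmaK x y z > 0 := by
  have hB := exp_add_one_lt_exp_half_mul_two_mul_cosh_half hyz
  have hA := exp_half_mul_two_mul_cosh_half x
  have hexp : exp x < exp (-y) := by
    rw [abs_of_neg hx] at hzx
    exact exp_lt_exp.mpr (by linarith [le_abs_self y])
  refine ⟨by linarith, by linarith, ?_⟩
  rw [sigmaK, sign_of_neg hx]
  linarith
end

section
/- Let k₁ > 0 and k₂ > 0 be real parameters, and let a, b be real numbers with 0 ≤ a < b. Then the integration-by-parts identity holds: (1/k₂) · ∫_a^b (cosh z − cosh a)^{k₁−1} · (cosh 2b − cosh 2z)^{k₂} · sinh z dz = (4/k₁) · ∫_a^b (cosh z − cosh a)^{k₁} · (cosh 2b − cosh 2z)^{k₂−1} · cosh z · sinh z dz. -/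
/-!
Put `F z = (cosh z - cosh a) ^ k₁` and `G z = (cosh 2b - cosh 2z) ^ k₂`. Then
`F' = k₁ (cosh z - cosh a) ^ (k₁ - 1) sinh z` and, since `sinh 2z = 2 sinh z cosh z`,
`G' = -4 k₂ (cosh 2b - cosh 2z) ^ (k₂ - 1) cosh z sinh z`, so the identity is integration by
parts `∫ F' G = -∫ F G'` divided by `k₁ k₂`, the boundary term vanishing because `F a = 0 = G b`.
The derivatives may blow up at the endpoints when `k₁ < 1` or `k₂ < 1`; they are integrable
because `F` is monotone and `G` antitone on `[a, b]`.
-/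

open Real intervalIntegral Set

theorem intervalIntegrable_deriv_of_nonpos {g g' : ℝ → ℝ} {a b : ℝ}
    (hcont : ContinuousOn g (uIcc a b))
    (hderiv : ∀ x ∈ Ioo (min a b) (max a b), HasDerivAt g (g' x) x)
    (hneg : ∀ x ∈ Ioo (min a b) (max a b), g' x ≤ 0) :
    IntervalIntegrable g' MeasureTheory.volume a b := by
  have h : IntervalIntegrable (-g') MeasureTheory.volume a b :=
    intervalIntegrable_deriv_of_nonneg hcont.neg (fun x hx => (hderiv x hx).neg)
      fun x hx => neg_nonneg.2 (hneg x hx)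
  simpa using h.neg

theorem integral_deriv_mul_eq_neg_integral_mul_deriv_of_vanishing {u v u' v' : ℝ → ℝ}
    {a b : ℝ} (hab : a ≤ b) (hu : ContinuousOn u (Icc a b)) (hv : ContinuousOn v (Icc a b))
    (huu' : ∀ x ∈ Ioo a b, HasDerivAt u (u' x) x) (hvv' : ∀ x ∈ Ioo a b, HasDerivAt v (v' x) x)
    (hu' : ∀ x ∈ Ioo a b, 0 ≤ u' x) (hv' : ∀ x ∈ Ioo a b, v' x ≤ 0)
    (hua : u a = 0) (hvb : v b = 0) :
    ∫ x in a..b, u' x * v x = -∫ x in a..b, u x * v' x := by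
  rw [← uIcc_of_le hab] at hu hv
  have hI : Ioo (min a b) (max a b) = Ioo a b := by rw [min_eq_left hab, max_eq_right hab]
  rw [← hI] at huu' hvv' hu' hv'
  rw [integral_mul_deriv_eq_deriv_mul_of_hasDerivAt hu hv huu' hvv'
    (intervalIntegrable_deriv_of_nonneg hu huu' hu')
    (intervalIntegrable_deriv_of_nonpos hv hvv' hv'), hua, hvb]
  ring

theorem hasDerivAt_cosh_sub_rpow {c k z : ℝ} (hz : cosh z ≠ c) :
    HasDerivAt (fun z => (cosh z - c) ^ k) (k * (cosh z - c) ^ (k - 1) * sinh z) z := by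
  convert ((hasDerivAt_cosh z).sub_const c).rpow_const (p := k) (Or.inl (sub_ne_zero.2 hz))
    using 1
  ring

theorem hasDerivAt_sub_cosh_two_mul_rpow {c k z : ℝ} (hz : c ≠ cosh (2 * z)) :
    HasDerivAt (fun z => (c - cosh (2 * z)) ^ k)
      (-(4 * k * (c - cosh (2 * z)) ^ (k - 1) * cosh z * sinh z)) z := by
  convert (((hasDerivAt_cosh (2 * z)).comp z (hasDerivAt_const_mul 2)).const_sub c).rpow_const
    (p := k) (Or.inl (sub_ne_zero.2 hz)) using 1
  · rfl
  · rw [Function.comp_apply, sinh_two_mul]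
    ring

theorem stmt6 (k₁ k₂ : ℝ) (hk₁ : 0 < k₁) (hk₂ : 0 < k₂)
    (a b : ℝ) (ha : 0 ≤ a) (hab : a < b) :
    (1 / k₂) * ∫ z in a..b,
        (Real.cosh z - Real.cosh a) ^ (k₁ - 1) *
          (Real.cosh (2 * b) - Real.cosh (2 * z)) ^ k₂ * Real.sinh z
      = (4 / k₁) * ∫ z in a..b,
          (Real.cosh z - Real.cosh a) ^ k₁ *
            (Real.cosh (2 * b) - Real.cosh (2 * z)) ^ (k₂ - 1) *
              Real.cosh z * Real.sinh z := by
  have hlow : ∀ z ∈ Ioo a b, 0 < cosh z - cosh a := fun z hz =>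
    sub_pos.2 (cosh_strictMonoOn ha (ha.trans hz.1.le) hz.1)
  have hhigh : ∀ z ∈ Ioo a b, 0 < cosh (2 * b) - cosh (2 * z) := fun z hz =>
    sub_pos.2 (cosh_strictMonoOn (show 0 ≤ 2 * z by linarith [hz.1])
      (show 0 ≤ 2 * b by linarith [hz.2]) (by linarith [hz.2]))
  have hsinh : ∀ z ∈ Ioo a b, 0 ≤ sinh z := fun z hz => sinh_nonneg_iff.2 (ha.trans hz.1.le)
  have parts := integral_deriv_mul_eq_neg_integral_mul_deriv_of_vanishing
    (u := fun z => (cosh z - cosh a) ^ k₁) (v := fun z => (cosh (2 * b) - cosh (2 * z)) ^ k₂)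
    hab.le (by fun_prop (disch := positivity)) (by fun_prop (disch := positivity))
    (fun z hz => hasDerivAt_cosh_sub_rpow (sub_ne_zero.1 (hlow z hz).ne'))
    (fun z hz => hasDerivAt_sub_cosh_two_mul_rpow (sub_ne_zero.1 (hhigh z hz).ne'))
    (fun z hz => have := hlow z hz; have := hsinh z hz; by positivity)
    (fun z hz => have := hhigh z hz; have := hsinh z hz; have := cosh_pos z
      neg_nonpos.2 (by positivity))
    (by simp [hk₁.ne']) (by simp [hk₂.ne'])
  have hleft (z : ℝ) : k₁ * (cosh z - cosh a) ^ (k₁ - 1) * sinh z * (cosh (2 * b) - cosh (2 * z)) ^ k₂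
      = k₁ * ((cosh z - cosh a) ^ (k₁ - 1) * (cosh (2 * b) - cosh (2 * z)) ^ k₂ * sinh z) := by
    ring
  have hright (z : ℝ) : (cosh z - cosh a) ^ k₁ *
      -(4 * k₂ * (cosh (2 * b) - cosh (2 * z)) ^ (k₂ - 1) * cosh z * sinh z)
      = -(4 * k₂) * ((cosh z - cosh a) ^ k₁ * (cosh (2 * b) - cosh (2 * z)) ^ (k₂ - 1) *
        cosh z * sinh z) := by
    ring
  simp only [hleft, hright, integral_const_mul] at parts
  rw [div_mul_eq_mul_div, div_mul_eq_mul_div, div_eq_div_iff hk₂.ne' hk₁.ne']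
  linear_combination parts
end

section
/- Let k₁ > 0 and k₂ > 0 be real parameters, and let a, b be real numbers with 0 ≤ a < b. Then the double integral identity holds: 2 · ∫_a^b sinh(2w) · ( ∫_a^w (cosh z − cosh a)^{k₁−1} · (cosh 2w − cosh 2z)^{k₂−1} · sinh z dz ) dw = (1/k₂) · ∫_a^b (cosh z − cosh a)^{k₁−1} · (cosh 2b − cosh 2z)^{k₂} · sinh z dz. -/
/-!
Both sides integrate over the triangle `a < z ≤ w ≤ b`; swapping the order of integration
(legitimate because the integrand is nonnegative) reduces the identity to the inner integral
`∫_z^b 2 sinh 2w (cosh 2w - cosh 2z)^(k₂-1) dw = (cosh 2b - cosh 2z)^k₂ / k₂`. This is the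
fundamental theorem of calculus for `(cosh 2w - cosh 2z)^k₂ / k₂`, which stays continuous at
`w = z` because `k₂ > 0`, even where the integrand is singular.
-/

open Real intervalIntegral

open MeasureTheory Set

theorem integral_deriv_mul_rpow_sub {φ φ' : ℝ → ℝ} {u v k : ℝ} (huv : u ≤ v) (hk : 0 < k)
    (hcont : ContinuousOn φ (Icc u v)) (hderiv : ∀ x ∈ Ioo u v, HasDerivAt φ (φ' x) x)
    (hφ' : ∀ x ∈ Ioo u v, 0 ≤ φ' x) (hlt : ∀ x ∈ Ioo u v, φ u < φ x) :
    IntervalIntegrable (fun x => φ' x * (φ x - φ u) ^ (k - 1)) volume u v ∧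
      ∫ x in u..v, φ' x * (φ x - φ u) ^ (k - 1) = (φ v - φ u) ^ k / k := by
  have hG : ∀ x ∈ Ioo u v,
      HasDerivAt (fun y => (φ y - φ u) ^ k / k) (φ' x * (φ x - φ u) ^ (k - 1)) x := by
    intro x hx
    convert! (((hderiv x hx).sub_const (φ u)).rpow_const
      (Or.inl (sub_pos.2 (hlt x hx)).ne')).div_const k using 1
    field_simp
  have hGcont : ContinuousOn (fun y => (φ y - φ u) ^ k / k) (Icc u v) :=
    ((hcont.sub continuousOn_const).rpow_const fun _ _ => Or.inr hk.le).div_const k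
  -- A nonnegative derivative is automatically integrable, so the singularity at `u` is harmless.
  have hint : IntervalIntegrable (fun x => φ' x * (φ x - φ u) ^ (k - 1)) volume u v :=
    (intervalIntegrable_iff_integrableOn_Ioc_of_le huv).2 <|
      integrableOn_deriv_of_nonneg hGcont hG fun x hx =>
        mul_nonneg (hφ' x hx) (rpow_nonneg (sub_pos.2 (hlt x hx)).le _)
  refine ⟨hint, ?_⟩
  rw [integral_eq_sub_of_hasDerivAt_of_le huv hGcont hG hint, sub_self, zero_rpow hk.ne',
    zero_div, sub_zero]

theorem integral_mul_sinh_mul_cosh_sub_rpow {c u v k : ℝ} (hc : 0 < c) (hu : 0 ≤ u) (huv : u ≤ v)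
    (hk : 0 < k) :
    IntervalIntegrable (fun x => c * sinh (c * x) * (cosh (c * x) - cosh (c * u)) ^ (k - 1))
        volume u v ∧
      ∫ x in u..v, c * sinh (c * x) * (cosh (c * x) - cosh (c * u)) ^ (k - 1)
        = (cosh (c * v) - cosh (c * u)) ^ k / k := by
  refine integral_deriv_mul_rpow_sub (φ := fun x => cosh (c * x)) huv hk (by fun_prop)
    (fun x _ => ?_) (fun x hx => ?_) (fun x hx => ?_)
  · simpa [mul_comm] using ((hasDerivAt_id x).const_mul c).cosh
  · have : 0 ≤ c * x := mul_nonneg hc.le (hu.trans hx.1.le)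
    positivity
  · exact cosh_strictMonoOn (mem_Ici.2 (by positivity)) (mem_Ici.2 (by nlinarith [hx.1]))
      (mul_lt_mul_of_pos_left hx.1 hc)

theorem integral_integral_triangle_swap {f : ℝ → ℝ → ℝ} {a b : ℝ} (hab : a ≤ b)
    (hf : Measurable (Function.uncurry f))
    (hnn : ∀ z w, a < z → z ≤ w → w ≤ b → 0 ≤ f z w)
    (hslice : ∀ z ∈ Ioc a b, IntervalIntegrable (f z) volume z b)
    (hint : IntervalIntegrable (fun z => ∫ w in z..b, f z w) volume a b) :
    ∫ w in a..b, ∫ z in a..w, f z w = ∫ z in a..b, ∫ w in z..b, f z w := by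
  set μ := volume.restrict (Ioc a b)
  set F : ℝ → ℝ → ℝ := fun z w => if z ≤ w then f z w else 0 with hF
  have hFw : ∀ w, (fun z => F z w) = (Iic w).indicator (fun z => f z w) := fun w => by
    ext z; simp [hF, indicator_apply]
  have hFz : ∀ z, F z = (Ici z).indicator (f z) := fun z => by
    ext w; simp [hF, indicator_apply]
  have hμw : ∀ w ∈ Ioc a b, μ.restrict (Iic w) = volume.restrict (Ioc a w) := fun w hw => by
    rw [Measure.restrict_restrict measurableSet_Iic, inter_comm, Ioc_inter_Iic,
      min_eq_right hw.2]
  have hμz : ∀ z ∈ Ioc a b, μ.restrict (Ici z) = volume.restrict (Ioc z b) := fun z hz => by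
    rw [Measure.restrict_restrict measurableSet_Ici, Measure.restrict_congr_set Ioc_ae_eq_Icc]
    congr 1
    ext w
    simp only [mem_inter_iff, mem_Ici, mem_Ioc, mem_Icc]
    constructor
    · rintro ⟨hzw, -, hwb⟩; exact ⟨hzw, hwb⟩
    · rintro ⟨hzw, hwb⟩; exact ⟨hzw, hz.1.trans_le hzw, hwb⟩
  have hleft : ∀ w ∈ Ioc a b, ∫ z in a..w, f z w = ∫ z, F z w ∂μ := fun w hw => by
    rw [integral_of_le hw.1.le, hFw, MeasureTheory.integral_indicator measurableSet_Iic, hμw w hw]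
  have hright : ∀ z ∈ Ioc a b, ∫ w in z..b, f z w = ∫ w, F z w ∂μ := fun z hz => by
    rw [integral_of_le hz.2, hFz, MeasureTheory.integral_indicator measurableSet_Ici, hμz z hz]
  have hFint : Integrable (Function.uncurry F) (μ.prod μ) := by
    have hFmeas : Measurable (Function.uncurry F) :=
      Measurable.ite (measurableSet_le measurable_fst measurable_snd) hf measurable_const
    rw [integrable_prod_iff hFmeas.aestronglyMeasurable]
    constructor
    · filter_upwards [ae_restrict_mem measurableSet_Ioc] with z hz
      change Integrable (F z) μ
      rw [hFz, integrable_indicator_iff measurableSet_Ici, IntegrableOn, hμz z hz]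
      exact (hslice z hz).1
    · refine hint.1.congr ?_
      filter_upwards [ae_restrict_mem measurableSet_Ioc] with z hz
      rw [hright z hz]
      refine integral_congr_ae ?_
      filter_upwards [ae_restrict_mem measurableSet_Ioc] with w hw
      refine (norm_of_nonneg ?_).symm
      by_cases hzw : z ≤ w
      · simpa [hF, hzw] using hnn z w hz.1 hzw hw.2
      · simp [hF, hzw]
  rw [integral_of_le hab, integral_of_le hab, setIntegral_congr_fun measurableSet_Ioc hleft,
    setIntegral_congr_fun measurableSet_Ioc hright]
  exact (integral_integral_swap hFint).symm

theorem stmt8 (k₁ k₂ : ℝ) (hk₁ : 0 < k₁) (hk₂ : 0 < k₂)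
    (a b : ℝ) (ha : 0 ≤ a) (hab : a < b) :
    2 * ∫ w in a..b, Real.sinh (2 * w) *
        ∫ z in a..w,
          (Real.cosh z - Real.cosh a) ^ (k₁ - 1) *
            (Real.cosh (2 * w) - Real.cosh (2 * z)) ^ (k₂ - 1) * Real.sinh z
      = (1 / k₂) * ∫ z in a..b,
          (Real.cosh z - Real.cosh a) ^ (k₁ - 1) *
            (Real.cosh (2 * b) - Real.cosh (2 * z)) ^ k₂ * Real.sinh z := by
  set g : ℝ → ℝ := fun z => (cosh z - cosh a) ^ (k₁ - 1) * sinh z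
  set f : ℝ → ℝ → ℝ := fun z w =>
    2 * sinh (2 * w) * (cosh (2 * w) - cosh (2 * z)) ^ (k₂ - 1) * g z
  have hinner : ∀ z ∈ Icc a b,
      ∫ w in z..b, f z w = (cosh (2 * b) - cosh (2 * z)) ^ k₂ / k₂ * g z := fun z hz => by
    rw [intervalIntegral.integral_mul_const,
      (integral_mul_sinh_mul_cosh_sub_rpow two_pos (ha.trans hz.1) hz.2 hk₂).2]
  have hg : IntervalIntegrable g volume a b := by
    simpa [g, mul_comm] using (integral_mul_sinh_mul_cosh_sub_rpow one_pos ha hab.le hk₁).1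
  have hnn : ∀ z w, a < z → z ≤ w → w ≤ b → 0 ≤ f z w := fun z w haz hzw _ => by
    have hz : 0 ≤ z := ha.trans haz.le
    have hcosh_a : cosh a ≤ cosh z := cosh_strictMonoOn.monotoneOn ha hz haz.le
    have hcosh_2z : cosh (2 * z) ≤ cosh (2 * w) :=
      cosh_strictMonoOn.monotoneOn (mem_Ici.2 (by positivity)) (mem_Ici.2 (by linarith))
        (by linarith)
    have hw : 0 ≤ w := hz.trans hzw
    have hpow₁ := rpow_nonneg (sub_nonneg.2 hcosh_a) (k₁ - 1)
    have hpow₂ := rpow_nonneg (sub_nonneg.2 hcosh_2z) (k₂ - 1)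
    simp only [f, g]
    positivity
  have hslice : ∀ z ∈ Ioc a b, IntervalIntegrable (f z) volume z b := fun z hz =>
    (integral_mul_sinh_mul_cosh_sub_rpow two_pos (ha.trans hz.1.le) hz.2 hk₂).1.mul_const _
  have hint : IntervalIntegrable (fun z => ∫ w in z..b, f z w) volume a b := by
    refine (hg.continuousOn_mul (g := fun z => (cosh (2 * b) - cosh (2 * z)) ^ k₂ / k₂)
      ?_).congr fun z hz => (hinner z (Ioc_subset_Icc_self (uIoc_of_le hab.le ▸ hz))).symm
    exact ((continuousOn_const.sub (by fun_prop)).rpow_const fun _ _ => Or.inr hk₂.le).div_const _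
  calc 2 * ∫ w in a..b, sinh (2 * w) * ∫ z in a..w,
          (cosh z - cosh a) ^ (k₁ - 1) * (cosh (2 * w) - cosh (2 * z)) ^ (k₂ - 1) * sinh z
      = ∫ w in a..b, ∫ z in a..w, f z w := by
        rw [← intervalIntegral.integral_const_mul]
        refine integral_congr fun w _ => ?_
        simp only [f, g, ← intervalIntegral.integral_const_mul]
        refine integral_congr fun z _ => ?_
        ring
    _ = ∫ z in a..b, ∫ w in z..b, f z w :=
        integral_integral_triangle_swap hab.le (by fun_prop) hnn hslice hint
    _ = _ := by
        rw [← intervalIntegral.integral_const_mul]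
        refine integral_congr fun z hz => ?_
        rw [hinner z (uIcc_of_le hab.le ▸ hz)]
        ring
end
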